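/- The map T defined by T(w)=(−1)^{ℓ(w)}w on words w is an algebra homomorphism from (k⟨A⟩,*) to (k⟨A⟩,⋆) and from (k⟨A⟩,⋆) to (k⟨A⟩,*): for all u,v ∈ k⟨A⟩, T(u * v) = T(u) ⋆ T(v) and T(u ⋆ v) = T(u) * T(v). -/

import Mathlib

/-!
Setting (Hoffman–Ihara, "Quasi-shuffle products revisited"):
`k` is a field containing `ℚ`, `A` a countable set of letters, `kA` the `k`-vector space
with basis `A` equipped with an associative commutative bilinear product `⋄` (given below as
a bilinear map `d`), and `k⟨A⟩` the noncommutative polynomial algebra on `A`, realized as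
the monoid algebra of the free monoid of words on `A`.
-/

noncomputable section

open scoped BigOperators TensorProduct

section QuasiShuffle

variable (k A : Type*) [Field k] [CharZero k] [Countable A]

/-- `k⟨A⟩`, the noncommutative polynomial algebra on `A`: the `k`-vector space with basis
the words in `A`, with concatenation product and unit the empty word. -/
abbrev KAlg : Type _ := MonoidAlgebra k (FreeMonoid A)

/-- `kA`, the `k`-vector space with basis `A`. -/
abbrev KA : Type _ := A →₀ k

variable {k A}

/-- The basis element of `k⟨A⟩` corresponding to a word. -/
def word (w : List A) : KAlg k A := MonoidAlgebra.of k (FreeMonoid A) (FreeMonoid.ofList w)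

/-- Linear extension to `k⟨A⟩` of a function defined on words. -/
def liftW {N : Type*} [AddCommMonoid N] [Module k N] (g : List A → N) :
    KAlg k A →ₗ[k] N :=
  (Finsupp.lsum k fun w => LinearMap.toSpanSingleton k N (g (FreeMonoid.toList w))) ∘ₗ
    (MonoidAlgebra.coeffLinearEquiv k).toLinearMap

/-- The inclusion of `kA` into `k⟨A⟩` (letters as one-letter words). -/
def incl : KA k A →ₗ[k] KAlg k A :=
  Finsupp.lsum k fun a => LinearMap.toSpanSingleton k (KAlg k A) (word [a])

/-- The linear involution `T`, `T(w) = (-1)^{ℓ(w)} w` on words. -/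
def Tmap : KAlg k A →ₗ[k] KAlg k A :=
  liftW fun w => ((-1 : k) ^ w.length) • word w


set_option linter.unusedSectionVars false in
lemma liftW_word {N : Type*} [AddCommMonoid N] [Module k N] (g : List A → N) (w : List A) :
    liftW (k := k) g (word w) = g w := by
  rw [liftW, word, MonoidAlgebra.of_apply, LinearMap.comp_apply]
  erw [Finsupp.lsum_single]
  rw [LinearMap.toSpanSingleton_apply_one, FreeMonoid.toList_ofList]

lemma Tmap_word (w : List A) : Tmap (word (k := k) w) = ((-1 : k) ^ w.length) • word w :=
  liftW_word _ w

set_option linter.unusedSectionVars false in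
lemma word_cons (a : A) (w : List A) : word (k := k) (a :: w) = word [a] * word w := by
  rw [word, word, word, MonoidAlgebra.of_apply, MonoidAlgebra.of_apply, MonoidAlgebra.of_apply,
    MonoidAlgebra.single_mul_single, one_mul]
  rfl

set_option linter.unusedSectionVars false in
lemma single_eq_smul_word (m : FreeMonoid A) (r : k) :
    (MonoidAlgebra.single m r : KAlg k A) = r • word (FreeMonoid.toList m) := by
  rw [word, MonoidAlgebra.of_apply, FreeMonoid.ofList_toList]
  rw [MonoidAlgebra.smul_single', mul_one]

set_option linter.unusedSectionVars false in
lemma incl_single (a : A) (c : k) : incl (Finsupp.single a c) = c • word (k := k) [a] := by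
  rw [incl]
  erw [Finsupp.lsum_single]
  rw [LinearMap.toSpanSingleton_apply]

lemma Tmap_letter_mul (a : A) (x : KAlg k A) :
    Tmap (word [a] * x) = - (word (k := k) [a] * Tmap x) := by
  induction x using MonoidAlgebra.induction_linear with
  | zero => simp
  | add f g hf hg => simp only [mul_add, map_add, hf, hg, neg_add]
  | single m r =>
    simp only [single_eq_smul_word, mul_smul_comm, map_smul, ← word_cons, Tmap_word,
      List.length_cons, pow_succ, smul_smul, neg_mul, mul_neg, mul_one, neg_smul, neg_neg,
      smul_neg]

lemma Tmap_incl_mul (y : KA k A) (x : KAlg k A) :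
    Tmap (incl y * x) = - (incl y * Tmap x) := by
  induction y using Finsupp.induction_linear with
  | zero => simp
  | add f g hf hg => simp only [map_add, add_mul, hf, hg, neg_add]
  | single a c =>
    simp only [incl_single, smul_mul_assoc, map_smul, Tmap_letter_mul, smul_neg]

lemma Tmap_word_nil : Tmap (word ([] : List A)) = (word [] : KAlg k A) := by
  rw [Tmap_word]; simp

lemma Tmap_key (d : KA k A →ₗ[k] KA k A →ₗ[k] KA k A)
    (m m' : KAlg k A →ₗ[k] KAlg k A →ₗ[k] KAlg k A)
    (hm1l : ∀ x, m (word []) x = x) (hm1r : ∀ x, m x (word []) = x)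
    (hm'1l : ∀ x, m' (word []) x = x) (hm'1r : ∀ x, m' x (word []) = x)
    (c c' : k) (hcc : c' = -c)
    (hrec : ∀ (a b : A) (w v : List A),
      m (word (a :: w)) (word (b :: v)) =
        word [a] * m (word w) (word (b :: v)) + word [b] * m (word (a :: w)) (word v) +
          c • (incl (d (Finsupp.single a 1) (Finsupp.single b 1)) * m (word w) (word v)))
    (hrec' : ∀ (a b : A) (w v : List A),
      m' (word (a :: w)) (word (b :: v)) =
        word [a] * m' (word w) (word (b :: v)) + word [b] * m' (word (a :: w)) (word v) +
          c' • (incl (d (Finsupp.single a 1) (Finsupp.single b 1)) * m' (word w) (word v))) :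
    ∀ u v, Tmap (m u v) = m' (Tmap u) (Tmap v) := by
  have H : ∀ w v : List A, Tmap (m (word w) (word v)) = m' (Tmap (word w)) (Tmap (word v)) := by
    intro w
    induction w with
    | nil => intro v; rw [hm1l, Tmap_word_nil, hm'1l]
    | cons a w ih =>
      intro v
      induction v with
      | nil => rw [hm1r, Tmap_word_nil, hm'1r]
      | cons b v ihv =>
        rw [hrec a b w v, map_add, map_add, Tmap_letter_mul, Tmap_letter_mul, map_smul,
          Tmap_incl_mul, ih (b :: v), ihv, ih v]
        simp only [Tmap_word, map_smul, LinearMap.smul_apply, List.length_cons]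
        rw [hrec' a b w v, hcc]
        simp only [mul_smul_comm, smul_smul, smul_neg, neg_neg, neg_smul, pow_succ, smul_add,
          mul_neg, neg_mul, mul_one]
        module
  intro u v
  induction u using MonoidAlgebra.induction_linear with
  | zero => simp
  | add f g hf hg => simp only [map_add, LinearMap.add_apply, hf, hg]
  | single mu r =>
    induction v using MonoidAlgebra.induction_linear with
    | zero => simp
    | add f g hf hg => simp only [map_add, LinearMap.add_apply, hf, hg]
    | single mv s =>
      simp only [single_eq_smul_word, map_smul, LinearMap.smul_apply, H]

/-- Proposition 3.5 of Hoffman–Ihara: `T` is an algebra homomorphism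
from `(k⟨A⟩,*)` to `(k⟨A⟩,⋆)` and from `(k⟨A⟩,⋆)` to `(k⟨A⟩,*)`. -/
theorem Tmap_hom
    {k A : Type*} [Field k] [CharZero k] [Countable A]
    (d : KA k A →ₗ[k] KA k A →ₗ[k] KA k A)
    (hd_comm : ∀ x y, d x y = d y x)
    (hd_assoc : ∀ x y z, d (d x y) z = d x (d y z))
    (mS : KAlg k A →ₗ[k] KAlg k A →ₗ[k] KAlg k A)
    (hS_one_left : ∀ x, mS (word []) x = x)
    (hS_one_right : ∀ x, mS x (word []) = x)
    (hS_rec : ∀ (a b : A) (w v : List A),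
      mS (word (a :: w)) (word (b :: v)) =
        word [a] * mS (word w) (word (b :: v)) + word [b] * mS (word (a :: w)) (word v) +
          incl (d (Finsupp.single a 1) (Finsupp.single b 1)) * mS (word w) (word v))
    (mT : KAlg k A →ₗ[k] KAlg k A →ₗ[k] KAlg k A)
    (hT_one_left : ∀ x, mT (word []) x = x)
    (hT_one_right : ∀ x, mT x (word []) = x)
    (hT_rec : ∀ (a b : A) (w v : List A),
      mT (word (a :: w)) (word (b :: v)) =
        word [a] * mT (word w) (word (b :: v)) + word [b] * mT (word (a :: w)) (word v) -
          incl (d (Finsupp.single a 1) (Finsupp.single b 1)) * mT (word w) (word v))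
    :
    (∀ u v, Tmap (mS u v) = mT (Tmap u) (Tmap v)) ∧
    (∀ u v, Tmap (mT u v) = mS (Tmap u) (Tmap v)) := by
  have hS' : ∀ (a b : A) (w v : List A),
      mS (word (a :: w)) (word (b :: v)) =
        word [a] * mS (word w) (word (b :: v)) + word [b] * mS (word (a :: w)) (word v) +
          (1 : k) • (incl (d (Finsupp.single a 1) (Finsupp.single b 1)) * mS (word w) (word v)) := by
    intro a b w v
    rw [one_smul]
    exact hS_rec a b w v
  have hT' : ∀ (a b : A) (w v : List A),
      mT (word (a :: w)) (word (b :: v)) =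
        word [a] * mT (word w) (word (b :: v)) + word [b] * mT (word (a :: w)) (word v) +
          (-1 : k) • (incl (d (Finsupp.single a 1) (Finsupp.single b 1)) * mT (word w) (word v)) := by
    intro a b w v
    rw [neg_smul, one_smul, ← sub_eq_add_neg]
    exact hT_rec a b w v
  exact ⟨Tmap_key d mS mT hS_one_left hS_one_right hT_one_left hT_one_right 1 (-1) (by ring)
      hS' hT',
    Tmap_key d mT mS hT_one_left hT_one_right hS_one_left hS_one_right (-1) 1 (by ring)
      hT' hS'⟩


end QuasiShuffle
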